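/- Let a > 0, e ∈ [0,1), and E₁, E₂ ∈ ℝ with 0 ≤ E₂ − E₁ ≤ 2π. Let P(E) = (a(cos E − e), a√(1−e²) sin E) ∈ ℝ², r₁ = ‖P(E₁)‖, r₂ = ‖P(E₂)‖, d = ‖P(E₂) − P(E₁)‖, and set A₀ = arccos(e cos((E₁ + E₂)/2)). Then (r₁ + r₂ + d)/(2a) = 1 − cos((E₂ − E₁)/2 + A₀) and (r₁ + r₂ − d)/(2a) = 1 − cos(−(E₂ − E₁)/2 + A₀). -/
import Mathlib
open Real

/-- Elliptic position at eccentric anomaly `E`, with the attracting focus at the origin. -/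
noncomputable def ellP (a e E : ℝ) : EuclideanSpace ℝ (Fin 2) :=
  (WithLp.equiv 2 (Fin 2 → ℝ)).symm
    ![a * (Real.cos E - e), a * Real.sqrt (1 - e ^ 2) * Real.sin E]

lemma norm_pair2 (x y : ℝ) :
    ‖(WithLp.equiv 2 (Fin 2 → ℝ)).symm ![x, y]‖ = Real.sqrt (x ^ 2 + y ^ 2) := by
  rw [EuclideanSpace.norm_eq]
  simp [Fin.sum_univ_two, sq_abs]

lemma sub_two (x y u v : ℝ) :
    (WithLp.equiv 2 (Fin 2 → ℝ)).symm ![x, y] - (WithLp.equiv 2 (Fin 2 → ℝ)).symm ![u, v]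
      = (WithLp.equiv 2 (Fin 2 → ℝ)).symm ![x - u, y - v] := by
  apply (WithLp.equiv 2 (Fin 2 → ℝ)).injective
  ext i
  fin_cases i <;> simp

lemma norm_ellP (a e E : ℝ) (ha : 0 < a) (he0 : 0 ≤ e) (he1 : e < 1) :
    ‖ellP a e E‖ = a * (1 - e * Real.cos E) := by
  have h1 : (0:ℝ) ≤ 1 - e ^ 2 := by nlinarith
  have hc : e * Real.cos E ≤ e * 1 := by
    have := Real.cos_le_one E; nlinarith
  have hpos : 0 ≤ a * (1 - e * Real.cos E) := by nlinarith
  rw [ellP, norm_pair2]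
  have : (a * (Real.cos E - e)) ^ 2 + (a * Real.sqrt (1 - e ^ 2) * Real.sin E) ^ 2
      = (a * (1 - e * Real.cos E)) ^ 2 := by
    have hs : Real.sqrt (1 - e ^ 2) ^ 2 = 1 - e ^ 2 := Real.sq_sqrt h1
    have hp : Real.sin E ^ 2 + Real.cos E ^ 2 = 1 := Real.sin_sq_add_cos_sq E
    linear_combination (a ^ 2 * Real.sin E ^ 2) * hs + a ^ 2 * (1 - e ^ 2) * hp
  rw [this, Real.sqrt_sq hpos]

theorem lambert_aux_eqs (a e E₁ E₂ : ℝ) (ha : 0 < a) (he0 : 0 ≤ e) (he1 : e < 1)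
    (hE0 : 0 ≤ E₂ - E₁) (hE2 : E₂ - E₁ ≤ 2 * π)
    (A₀ : ℝ) (hA₀ : A₀ = Real.arccos (e * Real.cos ((E₁ + E₂) / 2))) :
    (‖ellP a e E₁‖ + ‖ellP a e E₂‖ + ‖ellP a e E₂ - ellP a e E₁‖) / (2 * a)
        = 1 - Real.cos ((E₂ - E₁) / 2 + A₀) ∧
    (‖ellP a e E₁‖ + ‖ellP a e E₂‖ - ‖ellP a e E₂ - ellP a e E₁‖) / (2 * a)
        = 1 - Real.cos (-((E₂ - E₁) / 2) + A₀) := by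
  set m := (E₁ + E₂) / 2 with hm
  set h := (E₂ - E₁) / 2 with hh
  set c := e * Real.cos m with hcdef
  have h1 : (0:ℝ) ≤ 1 - e ^ 2 := by nlinarith
  have hcb : |c| ≤ 1 := by
    rw [abs_mul, abs_of_nonneg he0]
    have := abs_cos_le_one m
    nlinarith [abs_nonneg (Real.cos m)]
  have hcA : Real.cos A₀ = c := by
    rw [hA₀, Real.cos_arccos (neg_le_of_abs_le hcb) (le_of_abs_le hcb)]
  have hsA : Real.sin A₀ = Real.sqrt (1 - c ^ 2) := by
    rw [hA₀, Real.sin_arccos]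
  -- sin h ≥ 0
  have hh0 : 0 ≤ h := by rw [hh]; linarith
  have hhπ : h ≤ π := by rw [hh]; linarith
  have hsinh : 0 ≤ Real.sin h := Real.sin_nonneg_of_nonneg_of_le_pi hh0 hhπ
  -- E₁ = m - h, E₂ = m + h
  have hE1 : E₁ = m - h := by rw [hm, hh]; ring
  have hE2' : E₂ = m + h := by rw [hm, hh]; ring
  -- norms
  have hr1 : ‖ellP a e E₁‖ = a * (1 - e * Real.cos E₁) := norm_ellP a e E₁ ha he0 he1
  have hr2 : ‖ellP a e E₂‖ = a * (1 - e * Real.cos E₂) := norm_ellP a e E₂ ha he0 he1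
  -- sum of r
  have hsum : ‖ellP a e E₁‖ + ‖ellP a e E₂‖ = 2 * a * (1 - c * Real.cos h) := by
    rw [hr1, hr2, hE1, hE2', Real.cos_sub, Real.cos_add, hcdef]; ring
  -- d
  have hd : ‖ellP a e E₂ - ellP a e E₁‖ = 2 * a * Real.sin h * Real.sqrt (1 - c ^ 2) := by
    rw [ellP, ellP, sub_two, norm_pair2]
    have hs : Real.sqrt (1 - e ^ 2) ^ 2 = 1 - e ^ 2 := Real.sq_sqrt h1
    have hkey : (a * (Real.cos E₂ - e) - a * (Real.cos E₁ - e)) ^ 2 +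
        (a * Real.sqrt (1 - e ^ 2) * Real.sin E₂ - a * Real.sqrt (1 - e ^ 2) * Real.sin E₁) ^ 2
        = (2 * a * Real.sin h) ^ 2 * (1 - c ^ 2) := by
      rw [hE1, hE2', Real.cos_sub, Real.cos_add, Real.sin_sub, Real.sin_add, hcdef]
      have hpm : Real.sin m ^ 2 + Real.cos m ^ 2 = 1 := Real.sin_sq_add_cos_sq m
      have hph : Real.sin h ^ 2 + Real.cos h ^ 2 = 1 := Real.sin_sq_add_cos_sq h
      linear_combination (4 * a ^ 2 * Real.sin h ^ 2 * Real.cos m ^ 2) * hs + (4 * a ^ 2 * Real.sin h ^ 2) * hpm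
    rw [hkey, Real.sqrt_mul (sq_nonneg _), Real.sqrt_sq (by positivity)]
  have ha' : (2 : ℝ) * a ≠ 0 := by positivity
  constructor
  · rw [hsum, hd, Real.cos_add, hcA, hsA]
    field_simp
    ring
  · rw [hsum, hd, Real.cos_add, Real.cos_neg, Real.sin_neg, hcA, hsA]
    field_simp
    ring
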